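/- arXiv:1712.05521 — 8 statements merged into one kernel-verified Lean document; each statement's English description precedes it below -/
import Mathlib

section
/- Let G be a Hausdorff topological abelian group. Then every functionally bounded subset A of G is precompact (totally bounded). -/
/-!
Suppose `A` is not covered by finitely many translates of a neighbourhood `U` of `0`. Then `A`
contains a sequence `aₙ` with `aₙ - aₘ ∉ U` for `m < n`. For a small symmetric neighbourhood `W`,
every translate `x + W` meets at most one of the sets `aₙ + W`, so if `φ` is a bump function at `0`
supported in `W` (topological groups are completely regular), the sum `∑ₙ n φ(x - aₙ)` is locally
finite, hence continuous, and it takes the value `n` at `aₙ`: it is unbounded on `A`.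
-/

open Filter Set Topology Function

theorem CompletelyRegularSpace.exists_continuous_eq_one_support_subset {X : Type*}
    [TopologicalSpace X] [CompletelyRegularSpace X] {x : X} {W : Set X} (hW : W ∈ 𝓝 x) :
    ∃ φ : X → ℝ, Continuous φ ∧ φ x = 1 ∧ support φ ⊆ W := by
  obtain ⟨f, hf, hfx, hfW⟩ :=
    completely_regular_isOpen x (interior W) isOpen_interior (mem_interior_iff_mem_nhds.2 hW)
  refine ⟨fun y => 1 - (f y : ℝ), continuous_const.sub (continuous_subtype_val.comp hf),
    by simp [hfx], fun y hy => ?_⟩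
  by_contra hyW
  exact hy (by simp [hfW fun h => hyW (interior_subset h)])

@[to_additive]
instance IsTopologicalGroup.completelyRegularSpace {G : Type*} [Group G] [TopologicalSpace G]
    [IsTopologicalGroup G] : CompletelyRegularSpace G :=
  .of_exists_uniformSpace ⟨IsTopologicalGroup.rightUniformSpace G, rfl⟩

theorem exists_seq_sub_notMem_of_forall_not_subset_iUnion {G : Type*} [AddCommGroup G]
    {A U : Set G} (h : ∀ F : Finset G, ¬A ⊆ ⋃ g ∈ F, (fun u => g + u) '' U) :
    ∃ a : ℕ → G, (∀ n, a n ∈ A) ∧ ∀ m n, m < n → a n - a m ∉ U := by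
  refine exists_seq_of_forall_finset_exists (· ∈ A) (fun x y => y - x ∉ U) fun F _ => ?_
  obtain ⟨y, hyA, hyF⟩ := not_subset.1 (h F)
  exact ⟨y, hyA, fun g hg hgU => hyF (mem_biUnion hg ⟨y - g, hgU, add_sub_cancel g y⟩)⟩

section SeparatedFamily

variable {G ι : Type*} [AddCommGroup G] [LinearOrder ι] {U W : Set G} {a : ι → G}

theorem eq_of_sub_mem_of_sub_mem (ha : ∀ i j, i < j → a j - a i ∉ U)
    (hWU : ∀ {v w s t}, v ∈ W → w ∈ W → s ∈ W → t ∈ W → v + w + s + t ∈ U)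
    (hWneg : ∀ w ∈ W, -w ∈ W) {x y z : G} {i j : ι} (hyx : y - x ∈ W) (hyi : y - a i ∈ W)
    (hzx : z - x ∈ W) (hzj : z - a j ∈ W) : i = j := by
  have hij : a j - a i ∈ U := by
    convert hWU hyi (hWneg _ hyx) hzx (hWneg _ hzj) using 1
    abel
  have hji : a i - a j ∈ U := by
    convert hWU hzj (hWneg _ hzx) hyx (hWneg _ hyi) using 1
    abel
  rcases lt_trichotomy i j with h | h | h
  · exact absurd hij (ha i j h)
  · exact h
  · exact absurd hji (ha j i h)

variable [TopologicalSpace G] [IsTopologicalAddGroup G]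

theorem locallyFinite_preimage_sub (ha : ∀ i j, i < j → a j - a i ∉ U)
    (hWU : ∀ {v w s t}, v ∈ W → w ∈ W → s ∈ W → t ∈ W → v + w + s + t ∈ U)
    (hWneg : ∀ w ∈ W, -w ∈ W) (hW : W ∈ 𝓝 0) :
    LocallyFinite fun i => (· - a i) ⁻¹' W := by
  intro x
  refine ⟨(· - x) ⁻¹' W, (continuous_sub_right x).continuousAt.preimage_mem_nhds
    (by rwa [sub_self]), Subsingleton.finite ?_⟩
  rintro i ⟨y, hyi, hyx⟩ j ⟨z, hzj, hzx⟩
  exact eq_of_sub_mem_of_sub_mem ha hWU hWneg hyx hyi hzx hzj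

end SeparatedFamily

theorem exists_continuous_apply_seq_eq_of_sub_notMem {G : Type*} [AddCommGroup G]
    [TopologicalSpace G] [IsTopologicalAddGroup G] {U : Set G} (hU : U ∈ 𝓝 0) {a : ℕ → G}
    (ha : ∀ m n, m < n → a n - a m ∉ U) : ∃ f : G → ℝ, Continuous f ∧ ∀ n, f (a n) = n := by
  obtain ⟨V, hV, hVU⟩ := exists_nhds_zero_quarter hU
  set W := V ∩ -V
  have hW : W ∈ 𝓝 0 := inter_mem hV (neg_mem_nhds_zero G hV)
  have hWU : ∀ {v w s t}, v ∈ W → w ∈ W → s ∈ W → t ∈ W → v + w + s + t ∈ U :=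
    fun hv hw hs ht => hVU hv.1 hw.1 hs.1 ht.1
  have hWneg : ∀ w ∈ W, -w ∈ W := fun w hw => ⟨hw.2, by simpa using hw.1⟩
  obtain ⟨φ, hφ, hφ0, hφW⟩ := CompletelyRegularSpace.exists_continuous_eq_one_support_subset hW
  refine ⟨fun x => ∑ᶠ n : ℕ, (n : ℝ) * φ (x - a n),
    continuous_finsum (fun n => continuous_const.mul (hφ.comp (continuous_sub_right _)))
      ((locallyFinite_preimage_sub ha hWU hWneg hW).subset
        fun n => (support_mul_subset_right _ _).trans fun x hx => hφW hx),
    fun n => ?_⟩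
  dsimp only
  rw [finsum_eq_single _ n, sub_self, hφ0, mul_one]
  intro m hm
  have h0 : a n - a n ∈ W := by simpa using mem_of_mem_nhds hW
  have hφm : φ (a n - a m) = 0 := notMem_support.1 fun h =>
    hm (eq_of_sub_mem_of_sub_mem ha hWU hWneg h0 (hφW h) h0 h0)
  rw [hφm, mul_zero]

theorem stmt1_general {G : Type*} [AddCommGroup G] [TopologicalSpace G] [IsTopologicalAddGroup G]
    (A : Set G)
    (hA : ∀ f : G → ℝ, Continuous f → ∃ C : ℝ, ∀ a ∈ A, |f a| ≤ C) :
    ∀ U ∈ nhds (0 : G), ∃ F : Finset G, A ⊆ ⋃ g ∈ F, (fun u => g + u) '' U := by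
  intro U hU
  by_contra! hA_not_covered
  obtain ⟨a, haA, ha⟩ := exists_seq_sub_notMem_of_forall_not_subset_iUnion hA_not_covered
  obtain ⟨f, hf, hfa⟩ := exists_continuous_apply_seq_eq_of_sub_notMem hU ha
  obtain ⟨C, hC⟩ := hA f hf
  obtain ⟨n, hn⟩ := exists_nat_gt C
  have hnC : (n : ℝ) ≤ C := by simpa [hfa] using hC (a n) (haA n)
  linarith

/-- In a Hausdorff topological abelian group, every functionally bounded subset is
precompact (totally bounded): for every neighborhood `U` of `0` there is a finite
set `F` with `A ⊆ F + U`. -/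
theorem stmt1 {G : Type*} [AddCommGroup G] [TopologicalSpace G] [IsTopologicalAddGroup G]
    [T2Space G] (A : Set G)
    (hA : ∀ f : G → ℝ, Continuous f → ∃ C : ℝ, ∀ a ∈ A, |f a| ≤ C) :
    ∀ U ∈ nhds (0 : G), ∃ F : Finset G, A ⊆ ⋃ g ∈ F, (fun u => g + u) '' U :=
  stmt1_general A hA
end

section
/- Let X be a metrizable compact abelian group, κ an uncountable cardinal, G = X^κ with the product topology, and H = { g ∈ G : the support supp(g) = { i : g(i) ≠ 0 } is countable } with the subspace topology. Then H is a proper dense subgroup of G and H is sequentially compact. -/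
/-!
Density holds because basic open sets of the product constrain only finitely many
coordinates. For sequential compactness, the supports of the terms of a sequence in `H`
lie in one countable set `S`; the functions supported in `S` form a continuous image of
`X^S`, a countable product of compact metrizable spaces and hence sequentially compact.
-/

open Function Set Filter Topology

section CountableSupport

variable {ι M : Type*} [Zero M] [TopologicalSpace M]

theorem dense_setOf_finite_support : Dense {g : ι → M | (support g).Finite} := by
  classical
  rw [dense_iff_inter_open]
  rintro U hU ⟨f, hf⟩
  obtain ⟨I, u, hu, hsub⟩ := isOpen_pi_iff.mp hU f hf
  refine ⟨fun i => if i ∈ I then f i else 0, hsub fun i hi => ?_, I.finite_toSet.subset ?_⟩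
  · simpa [Finset.mem_coe.mp hi] using (hu i hi).2
  · intro i hi
    by_contra hiI
    exact hi (if_neg hiI)

theorem isSeqCompact_setOf_support_subset (S : Set ι) [SeqCompactSpace (S → M)] :
    IsSeqCompact {g : ι → M | support g ⊆ S} := by
  classical
  let extendByZero : (S → M) → ι → M := fun y i => if h : i ∈ S then y ⟨i, h⟩ else 0
  have hcont : Continuous extendByZero := continuous_pi fun i => by
    by_cases h : i ∈ S
    · simpa [extendByZero, h] using continuous_apply (⟨i, h⟩ : S)
    · simpa [extendByZero, h] using continuous_const
  have hrange : extendByZero '' univ = {g : ι → M | support g ⊆ S} := by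
    ext g
    constructor
    · rintro ⟨y, -, rfl⟩ i hi
      by_contra h
      exact hi (dif_neg h)
    · intro hg
      refine ⟨fun i => g i, mem_univ _, funext fun i => ?_⟩
      by_cases h : i ∈ S
      · exact dif_pos h
      · exact (dif_neg h).trans (notMem_support.mp fun hi => h (hg hi)).symm
  rw [← hrange]
  exact (isSeqCompact_univ_iff.mpr ‹_›).image hcont.seqContinuous

theorem isSeqCompact_setOf_countable_support [CompactSpace M] [FirstCountableTopology M] :
    IsSeqCompact {g : ι → M | (support g).Countable} := by
  intro u hu
  let S := ⋃ n, support (u n)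
  have hS : S.Countable := countable_iUnion hu
  have := hS.to_subtype
  obtain ⟨g, hg, φ, hφ, hlim⟩ :=
    isSeqCompact_setOf_support_subset (M := M) S fun n => subset_iUnion (fun n => support (u n)) n
  exact ⟨g, hS.mono hg, φ, hφ, hlim⟩

end CountableSupport

theorem stmt2_general {X : Type*} [AddCommGroup X] [TopologicalSpace X]
    [CompactSpace X] [TopologicalSpace.MetrizableSpace X] [Nontrivial X]
    {ι : Type*} [Uncountable ι] :
    let H : Set (ι → X) := {g | (Function.support g).Countable}
    (0 : ι → X) ∈ H ∧ (∀ a ∈ H, ∀ b ∈ H, a - b ∈ H) ∧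
      H ≠ Set.univ ∧ Dense H ∧ IsSeqCompact H := by
  intro H
  obtain ⟨x, hx⟩ := exists_ne (0 : X)
  have hconst : (fun _ : ι => x) ∉ H := by
    simp [H, support_const hx, countable_univ_iff, not_countable]
  refine ⟨by simp [H], fun a ha b hb => (ha.union hb).mono (support_sub a b),
    ne_univ_iff_exists_notMem H |>.mpr ⟨_, hconst⟩,
    dense_setOf_finite_support.mono fun g hg => hg.countable,
    isSeqCompact_setOf_countable_support⟩

/-- Let `X` be a nontrivial compact metrizable abelian topological group and `ι` an
uncountable index type.  Then `H = {g ∈ X^ι : supp g is countable}` is a proper dense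
subgroup of the product, and `H` is sequentially compact. -/
theorem stmt2 {X : Type*} [AddCommGroup X] [TopologicalSpace X] [IsTopologicalAddGroup X]
    [CompactSpace X] [TopologicalSpace.MetrizableSpace X] [Nontrivial X]
    {ι : Type*} [Uncountable ι] :
    let H : Set (ι → X) := {g | (Function.support g).Countable}
    (0 : ι → X) ∈ H ∧ (∀ a ∈ H, ∀ b ∈ H, a - b ∈ H) ∧
      H ≠ Set.univ ∧ Dense H ∧ IsSeqCompact H :=
  stmt2_general
end

section
/- Let X be a metrizable compact abelian group, κ an uncountable cardinal, and H = { g ∈ X^κ : supp(g) is countable } with the subspace topology from the product. Then every continuous real-valued function on H is bounded, but H is not compact; in particular H is not a μ-space. -/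
/-!
The countable-support functions form a dense subset of `X^ι` that misses the constant
functions, so in the Hausdorff space `X^ι` it is not closed and hence not compact. On the other
hand every sequence in it lies in the compact set of functions supported in one countable set,
and a continuous real function that is bounded on each such compact set cannot be unbounded
along any sequence.
-/

open Set Function

def sigmaProduct (ι X : Type*) [Zero X] : Set (ι → X) := {g | (support g).Countable}

theorem exists_abs_le_of_forall_range_subset_isCompact {Y : Type*} [TopologicalSpace Y]
    (hY : ∀ x : ℕ → Y, ∃ K, IsCompact K ∧ range x ⊆ K) {f : Y → ℝ} (hf : Continuous f) :
    ∃ C, ∀ y, |f y| ≤ C := by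
  by_contra! hunbdd
  choose x hx using fun n : ℕ => hunbdd n
  obtain ⟨K, hK, hxK⟩ := hY x
  obtain ⟨C, hC⟩ := hK.exists_bound_of_continuousOn hf.continuousOn
  obtain ⟨n, hn⟩ := exists_nat_gt C
  have hxn : |f (x n)| ≤ C := by simpa only [Real.norm_eq_abs] using hC (x n) (hxK ⟨n, rfl⟩)
  linarith [hx n]

section SigmaProduct

variable {ι X : Type*} [Zero X]

theorem sigmaProduct_ne_univ [Uncountable ι] [Nontrivial X] : sigmaProduct ι X ≠ univ := by
  obtain ⟨x, hx⟩ := exists_ne (0 : X)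
  intro huniv
  have hconst : (fun _ : ι => x) ∈ sigmaProduct ι X := huniv ▸ mem_univ _
  rw [sigmaProduct, mem_ofPred_eq, support_const hx, countable_univ_iff] at hconst
  exact not_countable hconst

variable [TopologicalSpace X]

theorem isCompact_setOf_support_subset [CompactSpace X] (S : Set ι) :
    IsCompact {g : ι → X | support g ⊆ S} := by
  classical
  have hpi : {g : ι → X | support g ⊆ S} = univ.pi fun i => if i ∈ S then univ else {0} := by
    ext g
    simp only [mem_ofPred_eq, mem_univ_pi, support_subset_iff]
    refine forall_congr' fun i => ?_
    by_cases hi : i ∈ S <;> simp [hi]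
  rw [hpi]
  exact isCompact_univ_pi fun i => by split_ifs <;> simp [isCompact_univ]

theorem sigmaProduct.exists_isCompact_range_subset [CompactSpace X] (x : ℕ → sigmaProduct ι X) :
    ∃ K : Set (sigmaProduct ι X), IsCompact K ∧ range x ⊆ K := by
  set S := ⋃ n, support (x n : ι → X)
  have hS : S.Countable := countable_iUnion fun n => (x n).2
  refine ⟨Subtype.val ⁻¹' {g | support g ⊆ S}, ?_, ?_⟩
  · rw [Topology.IsEmbedding.subtypeVal.isCompact_iff,
      image_preimage_eq_of_subset fun g hg => ⟨⟨g, hS.mono hg⟩, rfl⟩]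
    exact isCompact_setOf_support_subset S
  · rintro _ ⟨n, rfl⟩
    exact subset_iUnion (fun n => support (x n : ι → X)) n

theorem dense_sigmaProduct : Dense (sigmaProduct ι X) := by
  classical
  rw [dense_iff_inter_open]
  rintro U hU ⟨y, hy⟩
  obtain ⟨I, u, hu, hIU⟩ := isOpen_pi_iff.1 hU y hy
  refine ⟨fun i => if i ∈ I then y i else 0, hIU fun i hi => ?_, I.countable_toSet.mono ?_⟩
  · simpa [show i ∈ I from hi] using (hu i hi).2
  · intro i hi
    by_contra hiI
    exact hi (if_neg hiI)

theorem not_isCompact_sigmaProduct [T2Space X] [Uncountable ι] [Nontrivial X] :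
    ¬ IsCompact (sigmaProduct ι X) := fun hcomp =>
  sigmaProduct_ne_univ <| by rw [← hcomp.isClosed.closure_eq, dense_sigmaProduct.closure_eq]

end SigmaProduct

theorem stmt3_general {X : Type*} [AddCommGroup X] [TopologicalSpace X]
    [CompactSpace X] [TopologicalSpace.MetrizableSpace X] [Nontrivial X]
    {ι : Type*} [Uncountable ι] :
    let H : Set (ι → X) := {g | (Function.support g).Countable}
    (∀ f : ↥H → ℝ, Continuous f → ∃ C : ℝ, ∀ x : ↥H, |f x| ≤ C) ∧
    ¬ IsCompact H ∧
    ¬ (∀ A : Set ↥H, (∀ f : ↥H → ℝ, Continuous f → ∃ C : ℝ, ∀ a ∈ A, |f a| ≤ C) →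
        IsCompact (closure A)) := by
  intro H
  have hbdd : ∀ f : ↥H → ℝ, Continuous f → ∃ C : ℝ, ∀ x : ↥H, |f x| ≤ C := fun _ =>
    exists_abs_le_of_forall_range_subset_isCompact sigmaProduct.exists_isCompact_range_subset
  have hnc : ¬ IsCompact H := not_isCompact_sigmaProduct
  refine ⟨hbdd, hnc, fun hmu => hnc ?_⟩
  have hcomp := hmu univ fun f hf => (hbdd f hf).imp fun _ hC a _ => hC a
  rw [closure_univ, isCompact_univ_iff] at hcomp
  exact isCompact_iff_compactSpace.mpr hcomp

/-- Let `X` be a nontrivial compact metrizable abelian topological group, `ι` uncountable and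
`H = {g ∈ X^ι : supp g countable}` with the subspace topology.  Then every continuous real
function on `H` is bounded, but `H` is not compact; in particular `H` is not a μ-space. -/
theorem stmt3 {X : Type*} [AddCommGroup X] [TopologicalSpace X] [IsTopologicalAddGroup X]
    [CompactSpace X] [TopologicalSpace.MetrizableSpace X] [Nontrivial X]
    {ι : Type*} [Uncountable ι] :
    let H : Set (ι → X) := {g | (Function.support g).Countable}
    (∀ f : ↥H → ℝ, Continuous f → ∃ C : ℝ, ∀ x : ↥H, |f x| ≤ C) ∧
    ¬ IsCompact H ∧
    ¬ (∀ A : Set ↥H, (∀ f : ↥H → ℝ, Continuous f → ∃ C : ℝ, ∀ a ∈ A, |f a| ≤ C) →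
        IsCompact (closure A)) :=
  stmt3_general
end

section
/- Let G be a complete Hausdorff topological abelian group, and suppose every subset of G that is countably compact in the Bohr topology (i.e., in a coarser Hausdorff group topology τ⁺ ≤ τ) is countably compact in G. Then every subset of G that is compact in τ⁺ is compact in τ. -/
/-!
A `τ⁺`-compact set `K` is `τ⁺`-closed, hence `τ`-closed, and by hypothesis it is
`τ`-countably compact.
In a uniform space a countably compact set is totally bounded: a sequence in it that is
`V`-separated would have a cluster point, and two of its terms would be close to that point.
A closed, totally bounded subset of the complete group `(G, τ)` is compact.
-/

open Filter Set UniformSpace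

theorem IsCountablyCompact.totallyBounded {X : Type*} [UniformSpace X] {s : Set X}
    (hs : IsCountablyCompact s) : TotallyBounded s := by
  intro V hV
  contrapose! hs
  obtain ⟨u, hu⟩ : ∃ u : ℕ → X, ∀ n, u n ∈ s ∧ ∀ m < n, u m ∉ ball (u n) V := by
    simp only [not_subset, mem_iUnion₂, not_exists, exists_prop] at hs
    simpa only [forall_and, forall_mem_image, not_and] using! seq_of_forall_finite_exists hs
  intro hs
  obtain ⟨a, -, ha⟩ := hs.seq_clusterPt u (Eventually.of_forall fun n => (hu n).1)
  obtain ⟨W, hW, _, hWV⟩ := comp_symm_mem_uniformity_sets hV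
  have hfreq : ∃ᶠ n in atTop, u n ∈ ball a W := ha.frequently (ball_mem_nhds a hW)
  obtain ⟨m, -, hm⟩ := frequently_atTop.1 hfreq 0
  obtain ⟨n, hmn, hn⟩ := frequently_atTop.1 hfreq (m + 1)
  exact (hu n).2 m hmn (hWV ⟨a, SetRel.symm W hn, hm⟩)

theorem IsCountablyCompact.isCompact_of_isClosed {X : Type*} [UniformSpace X] [CompleteSpace X]
    {s : Set X} (hs : IsCountablyCompact s) (hc : IsClosed s) : IsCompact s :=
  isCompact_iff_totallyBounded_isComplete.2 ⟨hs.totallyBounded, hc.isComplete⟩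

theorem stmt7_general {G : Type*} [AddCommGroup G] (τ τp : TopologicalSpace G)
    (hτg : @IsTopologicalAddGroup G τ _)
    (hτp2 : @T2Space G τp)
    (hle : ∀ s : Set G, @IsOpen G τp s → @IsOpen G τ s)
    (hcomp : @CompleteSpace G (@IsTopologicalAddGroup.rightUniformSpace G _ τ hτg))
    (hcc : ∀ A : Set G,
      (∀ 𝒰 : ℕ → Set G, (∀ n, @IsOpen G τp (𝒰 n)) → A ⊆ ⋃ n, 𝒰 n →
        ∃ F : Finset ℕ, A ⊆ ⋃ n ∈ F, 𝒰 n) →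
      (∀ 𝒰 : ℕ → Set G, (∀ n, @IsOpen G τ (𝒰 n)) → A ⊆ ⋃ n, 𝒰 n →
        ∃ F : Finset ℕ, A ⊆ ⋃ n ∈ F, 𝒰 n)) :
    ∀ K : Set G, @IsCompact G τp K → @IsCompact G τ K := by
  intro K hK
  have hKcc : @IsCountablyCompact G τ K :=
    (@isCountablyCompact_iff_countable_open_cover G τ K).2 <| hcc K <|
      (@isCountablyCompact_iff_countable_open_cover G τp K).1 <|
        @IsCompact.isCountablyCompact G τp K hK
  have hKclosed : @IsClosed G τ K :=
    @IsClosed.mk G τ K <| hle _ <|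
      @IsClosed.isOpen_compl G τp K (@IsCompact.isClosed G τp hτp2 K hK)
  exact @IsCountablyCompact.isCompact_of_isClosed G
    (@IsTopologicalAddGroup.rightUniformSpace G _ τ hτg) hcomp K hKcc hKclosed

/-- Let `(G, τ)` be a complete Hausdorff topological abelian group and `τ⁺ ≤ τ` a coarser
Hausdorff group topology.  If every `τ⁺`-countably compact subset of `G` is `τ`-countably
compact, then every `τ⁺`-compact subset of `G` is `τ`-compact. -/
theorem stmt7 {G : Type*} [AddCommGroup G] (τ τp : TopologicalSpace G)
    (hτg : @IsTopologicalAddGroup G τ _) (hτpg : @IsTopologicalAddGroup G τp _)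
    (hτ2 : @T2Space G τ) (hτp2 : @T2Space G τp)
    (hle : ∀ s : Set G, @IsOpen G τp s → @IsOpen G τ s)
    (hcomp : @CompleteSpace G (@IsTopologicalAddGroup.rightUniformSpace G _ τ hτg))
    (hcc : ∀ A : Set G,
      (∀ 𝒰 : ℕ → Set G, (∀ n, @IsOpen G τp (𝒰 n)) → A ⊆ ⋃ n, 𝒰 n →
        ∃ F : Finset ℕ, A ⊆ ⋃ n ∈ F, 𝒰 n) →
      (∀ 𝒰 : ℕ → Set G, (∀ n, @IsOpen G τ (𝒰 n)) → A ⊆ ⋃ n, 𝒰 n →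
        ∃ F : Finset ℕ, A ⊆ ⋃ n ∈ F, 𝒰 n)) :
    ∀ K : Set G, @IsCompact G τp K → @IsCompact G τ K :=
  stmt7_general τ τp hτg hτp2 hle hcomp hcc
end

section
/- Let (G, τ) be a Hausdorff topological group and τ⁺ ≤ τ a coarser Hausdorff group topology. Suppose (G, τ) is a countably μ-space (every countable functionally bounded subset of (G, τ) has compact closure in (G, τ)) and every subset of G that is not functionally bounded in (G, τ) contains an infinite subset that is closed and discrete in (G, τ⁺). Then τ and τ⁺ have the same convergent sequences. -/
/-!
The sequence `u` together with its `τ⁺`-limit `a` is `τ⁺`-compact, so it contains no infinite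
`τ⁺`-closed discrete subset; by hypothesis it is then functionally bounded in `τ`, and being
countable its `τ`-closure is `τ`-compact. On a `τ`-compact set the coarser Hausdorff topology `τ⁺`
has the same convergent sequences.
-/

open Filter Set Topology

def IsFunctionallyBounded {X : Type*} (t : TopologicalSpace X) (A : Set X) : Prop :=
  ∀ f : X → ℝ, Continuous[t, _] f → ∃ C : ℝ, ∀ a ∈ A, |f a| ≤ C

theorem isFunctionallyBounded_of_isCompact {X : Type*} {t t' : TopologicalSpace X}
    (hnb : ∀ A : Set X, ¬ IsFunctionallyBounded t A →
      ∃ B ⊆ A, B.Infinite ∧ IsClosed[t'] B ∧ (∀ b ∈ B, ∃ U : Set X, IsOpen[t'] U ∧ U ∩ B = {b}))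
    {A : Set X} (hA : @IsCompact X t' A) : IsFunctionallyBounded t A := by
  by_contra hbdd
  obtain ⟨B, hBA, hBinf, hBcl, hBiso⟩ := hnb A hbdd
  have hBcpt : @IsCompact X t' B := @IsCompact.of_isClosed_subset X t' A B hA hBcl hBA
  exact hBinf <| hBcpt.finite (@isDiscrete_iff_forall_mem_exists_isOpen X t' B |>.2 hBiso)

/-- A `t`-cluster point is a `t'`-cluster point, hence equals the `t'`-limit. -/
theorem Filter.Tendsto.of_isCompact_of_le {X Y : Type*} {t t' : TopologicalSpace X}
    [@T2Space X t'] (hle : t ≤ t') {K : Set X} (hK : @IsCompact X t K) {l : Filter Y}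
    {f : Y → X} {a : X} (hfK : ∀ᶠ y in l, f y ∈ K) (hf : Tendsto f l (@nhds X t' a)) :
    Tendsto f l (@nhds X t a) := by
  refine @IsCompact.tendsto_nhds_of_unique_mapClusterPt X t K Y l a f hK hfK fun x _ hx => ?_
  have hx' : NeBot (@nhds X t' x ⊓ @nhds X t' a) :=
    NeBot.mono hx (inf_le_inf (_root_.nhds_mono hle) hf)
  exact @eq_of_nhds_neBot X t' _ x a hx'

theorem stmt10_general {G : Type*} (τ τp : TopologicalSpace G)
    (hτp2 : @T2Space G τp)
    (hle : ∀ s : Set G, @IsOpen G τp s → @IsOpen G τ s)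
    (hcmu : ∀ A : Set G, A.Countable →
      (∀ f : G → ℝ, @Continuous G ℝ τ _ f → ∃ C : ℝ, ∀ a ∈ A, |f a| ≤ C) →
      @IsCompact G τ (@closure G τ A))
    (hnb : ∀ A : Set G,
      ¬ (∀ f : G → ℝ, @Continuous G ℝ τ _ f → ∃ C : ℝ, ∀ a ∈ A, |f a| ≤ C) →
      ∃ B ⊆ A, B.Infinite ∧ @IsClosed G τp B ∧
        (∀ b ∈ B, ∃ U : Set G, @IsOpen G τp U ∧ U ∩ B = {b})) :
    ∀ (u : ℕ → G) (a : G),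
      Filter.Tendsto u Filter.atTop (@nhds G τ a) ↔ Filter.Tendsto u Filter.atTop (@nhds G τp a) := by
  have hle' : τ ≤ τp := hle
  intro u a
  refine ⟨fun h => h.mono_right (nhds_mono hle'), fun h => ?_⟩
  set A : Set G := insert a (range u)
  have hAcpt : @IsCompact G τp A := @Tendsto.isCompact_insert_range G τp u a h
  have hK : @IsCompact G τ (closure[τ] A) :=
    hcmu A ((countable_range u).insert a) (isFunctionallyBounded_of_isCompact hnb hAcpt)
  exact h.of_isCompact_of_le hle' hK <| Eventually.of_forall fun n =>
    @subset_closure G τ A _ (mem_insert_of_mem a (mem_range_self n))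

/-- Let `(G, τ)` be a Hausdorff topological group and `τ⁺ ≤ τ` a coarser Hausdorff group
topology.  Suppose `(G, τ)` is a countably μ-space and every subset of `G` that is not
functionally bounded in `(G, τ)` contains an infinite subset that is closed and discrete in
`(G, τ⁺)`.  Then `τ` and `τ⁺` have the same convergent sequences. -/
theorem stmt10 {G : Type*} [Group G] (τ τp : TopologicalSpace G)
    (hτg : @IsTopologicalGroup G τ _) (hτpg : @IsTopologicalGroup G τp _)
    (hτ2 : @T2Space G τ) (hτp2 : @T2Space G τp)
    (hle : ∀ s : Set G, @IsOpen G τp s → @IsOpen G τ s)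
    (hcmu : ∀ A : Set G, A.Countable →
      (∀ f : G → ℝ, @Continuous G ℝ τ _ f → ∃ C : ℝ, ∀ a ∈ A, |f a| ≤ C) →
      @IsCompact G τ (@closure G τ A))
    (hnb : ∀ A : Set G,
      ¬ (∀ f : G → ℝ, @Continuous G ℝ τ _ f → ∃ C : ℝ, ∀ a ∈ A, |f a| ≤ C) →
      ∃ B ⊆ A, B.Infinite ∧ @IsClosed G τp B ∧
        (∀ b ∈ B, ∃ U : Set G, @IsOpen G τp U ∧ U ∩ B = {b})) :
    ∀ (u : ℕ → G) (a : G),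
      Filter.Tendsto u Filter.atTop (@nhds G τ a) ↔ Filter.Tendsto u Filter.atTop (@nhds G τp a) :=
  stmt10_general τ τp hτp2 hle hcmu hnb
end

section
/- Let G be a complete Hausdorff topological group, and suppose the compact subsets of (G, τ⁺) are sequentially compact (τ⁺ is a Šmulyan-space), where τ⁺ ≤ τ is a coarser Hausdorff group topology with the same convergent sequences as τ. Then every τ⁺-compact subset of G is τ-compact. -/
/-!
Convergent sequences of `τ⁺` converge in `τ`, so a `τ⁺`-compact set, being `τ⁺`-sequentially
compact, is `τ`-sequentially compact and hence totally bounded for the uniformity of `τ`. It is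
also `τ⁺`-closed, hence `τ`-closed, and closed totally bounded sets of a complete group are compact.
-/

open Filter

theorem IsSeqCompact.of_tendsto_imp {X : Type*} {t₁ t₂ : TopologicalSpace X}
    (h : ∀ (u : ℕ → X) (a : X), Tendsto u atTop (@nhds X t₁ a) → Tendsto u atTop (@nhds X t₂ a))
    {K : Set X} (hK : @IsSeqCompact X t₁ K) : @IsSeqCompact X t₂ K := by
  intro u hu
  obtain ⟨a, ha, φ, hφ, hlim⟩ := hK hu
  exact ⟨a, ha, φ, hφ, h _ a hlim⟩

theorem stmt11_general {G : Type*} [AddCommGroup G] (τ τp : TopologicalSpace G)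
    (hτg : @IsTopologicalAddGroup G τ _)
    (hτp2 : @T2Space G τp)
    (hle : ∀ s : Set G, @IsOpen G τp s → @IsOpen G τ s)
    (hcomp : @CompleteSpace G (@IsTopologicalAddGroup.rightUniformSpace G _ τ hτg))
    (hSm : ∀ K : Set G, @IsCompact G τp K → @IsSeqCompact G τp K)
    (hschur : ∀ (u : ℕ → G) (a : G),
      Filter.Tendsto u Filter.atTop (@nhds G τ a) ↔ Filter.Tendsto u Filter.atTop (@nhds G τp a)) :
    ∀ K : Set G, @IsCompact G τp K → @IsCompact G τ K := by
  intro K hK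
  let _ := @IsTopologicalAddGroup.rightUniformSpace G _ τ hτg
  have hseq : @IsSeqCompact G τ K :=
    (hSm K hK).of_tendsto_imp fun u a ↦ (hschur u a).2
  have hclosed : @IsClosed G τ K :=
    (@IsCompact.isClosed G τp hτp2 K hK).mono (TopologicalSpace.le_def.2 hle)
  exact hseq.totallyBounded.isCompact_of_isClosed hclosed

/-- Let `(G, τ)` be a complete Hausdorff topological abelian group and `τ⁺ ≤ τ` a coarser
Hausdorff group topology with the same convergent sequences as `τ`, and suppose all
`τ⁺`-compact subsets are `τ⁺`-sequentially compact (`τ⁺` is a Šmulyan space).  Then every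
`τ⁺`-compact subset of `G` is `τ`-compact. -/
theorem stmt11 {G : Type*} [AddCommGroup G] (τ τp : TopologicalSpace G)
    (hτg : @IsTopologicalAddGroup G τ _) (hτpg : @IsTopologicalAddGroup G τp _)
    (hτ2 : @T2Space G τ) (hτp2 : @T2Space G τp)
    (hle : ∀ s : Set G, @IsOpen G τp s → @IsOpen G τ s)
    (hcomp : @CompleteSpace G (@IsTopologicalAddGroup.rightUniformSpace G _ τ hτg))
    (hSm : ∀ K : Set G, @IsCompact G τp K → @IsSeqCompact G τp K)
    (hschur : ∀ (u : ℕ → G) (a : G),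
      Filter.Tendsto u Filter.atTop (@nhds G τ a) ↔ Filter.Tendsto u Filter.atTop (@nhds G τp a)) :
    ∀ K : Set G, @IsCompact G τp K → @IsCompact G τ K :=
  stmt11_general τ τp hτg hτp2 hle hcomp hSm hschur
end

section
/- Let G be an abelian topological group, and let U be a neighborhood of the identity in G. Then the polar U^▷ = { χ ∈ Ĝ : χ(U) ⊆ S₊ } is an equicontinuous subset of the character group Ĝ, and U^▷ is compact in the topology of pointwise convergence on Ĝ. -/
/-- A continuous character of an abelian topological group `G`, viewed as a `ℂ`-valued
function: continuous, additive-to-multiplicative, with unimodular values. -/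
def IsChar {G : Type*} [AddCommGroup G] [TopologicalSpace G] (χ : G → ℂ) : Prop :=
  Continuous χ ∧ (∀ x y, χ (x + y) = χ x * χ y) ∧ ∀ x, ‖χ x‖ = 1

/-!
Writing `z = χ x`, the identity `z² - 1 = (z - 1)(z + 1)` together with `‖z + 1‖² = 2 + 2 Re z ≥ 2`
on the unit circle shows that `‖z - 1‖² ≤ ‖z² - 1‖² / 2` whenever `Re z ≥ 0`. Hence if
`2ʲ • x ∈ U` for all `j ≤ m`, then `‖χ x - 1‖² ≤ 2 / 2ᵐ` for every `χ` in the polar of `U`, which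
is equicontinuity; it also forces every such `χ` to be continuous. The polar is then a closed set of
maps into the unit circle, so Tychonoff's theorem makes it compact.
-/

open Filter Topology

namespace Complex

lemma norm_sub_one_sq_of_norm_eq_one {z : ℂ} (hz : ‖z‖ = 1) : ‖z - 1‖ ^ 2 = 2 - 2 * z.re := by
  have hsq : z.re * z.re + z.im * z.im = 1 := by
    rw [← normSq_apply, ← Complex.sq_norm, hz, one_pow]
  rw [Complex.sq_norm, normSq_apply, sub_re, sub_im, one_re, one_im]
  linarith

lemma norm_add_one_sq_of_norm_eq_one {z : ℂ} (hz : ‖z‖ = 1) : ‖z + 1‖ ^ 2 = 2 + 2 * z.re := by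
  have h := norm_sub_one_sq_of_norm_eq_one (z := -z) (by rwa [norm_neg])
  rwa [← neg_add', norm_neg, neg_re, mul_neg, sub_neg_eq_add] at h

lemma two_mul_norm_sub_one_sq_le {z : ℂ} (hz : ‖z‖ = 1) (hre : 0 ≤ z.re) :
    2 * ‖z - 1‖ ^ 2 ≤ ‖z ^ 2 - 1‖ ^ 2 :=
  calc 2 * ‖z - 1‖ ^ 2 ≤ ‖z + 1‖ ^ 2 * ‖z - 1‖ ^ 2 := by
        rw [norm_add_one_sq_of_norm_eq_one hz]; gcongr; linarith
    _ = ‖z ^ 2 - 1‖ ^ 2 := by rw [← mul_pow, ← norm_mul]; ring_nf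

lemma two_pow_mul_norm_sub_one_sq_le {z : ℂ} (hz : ‖z‖ = 1) (m : ℕ)
    (hre : ∀ j ≤ m, 0 ≤ (z ^ 2 ^ j).re) : 2 ^ m * ‖z - 1‖ ^ 2 ≤ 2 := by
  induction m generalizing z with
  | zero =>
    have hre0 : 0 ≤ z.re := by simpa using hre 0 le_rfl
    rw [pow_zero, one_mul, norm_sub_one_sq_of_norm_eq_one hz]
    linarith
  | succ m ih =>
    have hsq : 2 ^ m * ‖z ^ 2 - 1‖ ^ 2 ≤ 2 := by
      refine ih (by rw [norm_pow, hz, one_pow]) fun j hj => ?_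
      rw [← pow_mul, ← pow_succ']
      exact hre (j + 1) (by omega)
    have hdouble := two_mul_norm_sub_one_sq_le hz (by simpa using hre 0 (Nat.zero_le _))
    calc 2 ^ (m + 1) * ‖z - 1‖ ^ 2 = 2 ^ m * (2 * ‖z - 1‖ ^ 2) := by ring
      _ ≤ 2 ^ m * ‖z ^ 2 - 1‖ ^ 2 := by gcongr
      _ ≤ 2 := hsq

end Complex

lemma map_two_pow_nsmul_eq_pow {G M : Type*} [AddMonoid G] [Monoid M] {χ : G → M}
    (hχ : ∀ x y, χ (x + y) = χ x * χ y) (x : G) (j : ℕ) : χ (2 ^ j • x) = χ x ^ 2 ^ j := by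
  induction j with
  | zero => simp
  | succ j ih => rw [pow_succ, mul_nsmul, two_nsmul, hχ, ih, ← sq, ← pow_mul, ← pow_succ]

lemma continuous_of_map_add_eq_mul {G M : Type*} [AddGroup G] [TopologicalSpace G]
    [IsTopologicalAddGroup G] [MulOneClass M] [TopologicalSpace M] [ContinuousMul M]
    {χ : G → M} (hχ : ∀ x y, χ (x + y) = χ x * χ y) (h : Tendsto χ (𝓝 0) (𝓝 1)) :
    Continuous χ := by
  refine continuous_iff_continuousAt.2 fun x => ?_
  have hshift : Tendsto (fun y => -x + y) (𝓝 x) (𝓝 0) := by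
    simpa using (continuous_const_add (-x)).tendsto x
  have := tendsto_const_nhds (x := χ x) |>.mul (h.comp hshift)
  simpa [ContinuousAt, Function.comp_def, ← hχ] using this

-- Continuity is left out so that the set is closed under pointwise limits; it is recovered in
-- `continuous_of_mem_charPolar`.
def charPolar {G : Type*} [Add G] (U : Set G) : Set (G → ℂ) :=
  {χ | (∀ x y, χ (x + y) = χ x * χ y) ∧ (∀ x, ‖χ x‖ = 1) ∧ ∀ x ∈ U, 0 ≤ (χ x).re}

section charPolar

variable {G : Type*}

lemma isClosed_charPolar [Add G] (U : Set G) : IsClosed (charPolar U) := by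
  simp only [charPolar, Set.ofPred_and, Set.ofPred_forall]
  exact (isClosed_iInter fun x => isClosed_iInter fun y =>
      isClosed_eq (by fun_prop) (by fun_prop)).inter
    ((isClosed_iInter fun x => isClosed_eq (by fun_prop) continuous_const).inter
      (isClosed_iInter fun x => isClosed_iInter fun _ =>
        isClosed_le continuous_const (by fun_prop)))

lemma isCompact_charPolar [Add G] (U : Set G) : IsCompact (charPolar U) :=
  (isCompact_univ_pi fun _ => isCompact_sphere 0 1).of_isClosed_subset (isClosed_charPolar U)
    fun _ hχ x _ => mem_sphere_zero_iff_norm.2 (hχ.2.1 x)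

lemma charPolar_equicontinuous [AddMonoid G] [TopologicalSpace G] [ContinuousAdd G] {U : Set G}
    (hU : U ∈ 𝓝 0) {ε : ℝ} (hε : 0 < ε) :
    ∃ V ∈ 𝓝 (0 : G), ∀ χ ∈ charPolar U, ∀ x ∈ V, ‖χ x - 1‖ < ε := by
  obtain ⟨m, hm⟩ := pow_unbounded_of_one_lt (2 / ε ^ 2) one_lt_two
  rw [div_lt_iff₀ (by positivity)] at hm
  have hV : ∀ᶠ x in 𝓝 (0 : G), ∀ j ≤ m, 2 ^ j • x ∈ U :=
    (eventually_all_finite (Set.finite_le_nat m)).2 fun j _ =>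
      ((continuous_nsmul (2 ^ j)).tendsto' 0 0 (nsmul_zero _)).eventually_mem hU
  refine ⟨_, hV, fun χ ⟨hadd, hnorm, hre⟩ x hx => ?_⟩
  have hsq := Complex.two_pow_mul_norm_sub_one_sq_le (hnorm x) m fun j hj => by
    rw [← map_two_pow_nsmul_eq_pow hadd]
    exact hre _ (hx j hj)
  exact lt_of_pow_lt_pow_left₀ 2 hε.le
    (lt_of_mul_lt_mul_left (hsq.trans_lt hm) (by positivity))

lemma continuous_of_mem_charPolar [AddGroup G] [TopologicalSpace G] [IsTopologicalAddGroup G]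
    {U : Set G} (hU : U ∈ 𝓝 0) {χ : G → ℂ} (hχ : χ ∈ charPolar U) : Continuous χ := by
  refine continuous_of_map_add_eq_mul hχ.1 (Metric.tendsto_nhds.2 fun ε hε => ?_)
  obtain ⟨V, hV, hVε⟩ := charPolar_equicontinuous hU hε
  filter_upwards [hV] with x hx
  rw [dist_eq_norm]
  exact hVε χ hχ x hx

end charPolar

/-- For a neighborhood `U` of `0` in an abelian topological group `G`, the polar
`U^▷ = {χ ∈ Ĝ : Re (χ x) ≥ 0 for x ∈ U}` is equicontinuous and compact in the topology of
pointwise convergence. -/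
theorem stmt13 {G : Type*} [AddCommGroup G] [TopologicalSpace G] [IsTopologicalAddGroup G]
    (U : Set G) (hU : U ∈ nhds (0 : G)) :
    let P : Set (G → ℂ) := {χ | IsChar χ ∧ ∀ x ∈ U, 0 ≤ (χ x).re}
    (∀ ε : ℝ, 0 < ε → ∃ V ∈ nhds (0 : G), ∀ χ ∈ P, ∀ x ∈ V, ‖χ x - 1‖ < ε) ∧
    IsCompact P := by
  intro P
  have hP : P = charPolar U := Set.ext fun χ =>
    ⟨fun ⟨⟨_, hadd, hnorm⟩, hre⟩ => ⟨hadd, hnorm, hre⟩,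
      fun hχ => ⟨⟨continuous_of_mem_charPolar hU hχ, hχ.1, hχ.2.1⟩, hχ.2.2⟩⟩
  rw [hP]
  exact ⟨fun _ hε => charPolar_equicontinuous hU hε, isCompact_charPolar U⟩
end

section
/- Let E be a real locally convex space and define ψ : E′ → Ĥom(E, S) by ψ(χ)(x) = exp(2πi·χ(x)). Then a subset A of E′ is equicontinuous if and only if ψ(A) is an equicontinuous set of characters of the additive topological group E. -/
/-!
On `[-1/2, 1/2]` the chord length `t ↦ ‖exp (2πit) - 1‖ = 2 |sin (π t)|` is squeezed between
`4 |t|` and `2π |t|`. The upper bound turns equicontinuity of `A` into that of `ψ(A)`.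
Conversely, if `V` is a convex neighbourhood of `0` on which every `‖ψ(χ) - 1‖` stays below
`4m`, then no `χ ∈ A` takes a value of modulus `m` on `V`; since `χ(V)` is an interval through
`0`, this forces `|χ| < m` on `V`.
-/

open Complex Filter Set Topology

lemma norm_exp_two_pi_I_mul_sub_one (t : ℝ) :
    ‖exp (2 * Real.pi * I * t) - 1‖ = 2 * |Real.sin (Real.pi * t)| := by
  have harg : 2 * (Real.pi : ℂ) * I * t = I * ((2 * Real.pi * t : ℝ) : ℂ) := by
    push_cast; ring
  rw [harg, norm_exp_I_mul_ofReal_sub_one, norm_mul, Real.norm_two, Real.norm_eq_abs]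
  ring_nf

lemma norm_exp_two_pi_I_mul_sub_one_le (t : ℝ) :
    ‖exp (2 * Real.pi * I * t) - 1‖ ≤ 2 * Real.pi * |t| := by
  have hsin : |Real.sin (Real.pi * t)| ≤ Real.pi * |t| := by
    simpa [abs_mul, abs_of_pos Real.pi_pos] using Real.abs_sin_le_abs (x := Real.pi * t)
  rw [norm_exp_two_pi_I_mul_sub_one]
  linarith

lemma four_mul_abs_le_norm_exp_two_pi_I_mul_sub_one {t : ℝ} (ht : |t| ≤ 1 / 2) :
    4 * |t| ≤ ‖exp (2 * Real.pi * I * t) - 1‖ := by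
  have habs : |Real.pi * t| = Real.pi * |t| := by rw [abs_mul, abs_of_pos Real.pi_pos]
  have hsin := Real.mul_abs_le_abs_sin (x := Real.pi * t) (by nlinarith [Real.pi_pos])
  rw [habs, ← mul_assoc, div_mul_cancel₀ 2 Real.pi_pos.ne'] at hsin
  rw [norm_exp_two_pi_I_mul_sub_one]
  linarith

lemma Set.OrdConnected.abs_lt_of_forall_abs_ne {S : Set ℝ} (hS : S.OrdConnected) (h0 : 0 ∈ S)
    {m : ℝ} (hm : 0 ≤ m) (h : ∀ y ∈ S, |y| ≠ m) {y : ℝ} (hy : y ∈ S) : |y| < m := by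
  by_contra! hmy
  rcases le_total 0 y with hy0 | hy0
  · rw [abs_of_nonneg hy0] at hmy
    exact h m (hS.out h0 hy ⟨hm, hmy⟩) (abs_of_nonneg hm)
  · rw [abs_of_nonpos hy0] at hmy
    exact h (-m) (hS.out hy h0 ⟨by linarith, by linarith⟩) (by rw [abs_neg, abs_of_nonneg hm])

lemma LocallyConvexSpace.equicontinuous_of_eventually_abs_ne {E : Type*} [AddCommGroup E]
    [Module ℝ E] [TopologicalSpace E] [LocallyConvexSpace ℝ E] {A : Set (E →L[ℝ] ℝ)}
    (h : ∀ᶠ m in 𝓝[>] 0, ∃ U ∈ 𝓝 (0 : E), ∀ χ ∈ A, ∀ x ∈ U, |χ x| ≠ m)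
    {ε : ℝ} (hε : 0 < ε) : ∃ U ∈ 𝓝 (0 : E), ∀ χ ∈ A, ∀ x ∈ U, |χ x| < ε := by
  obtain ⟨m, ⟨U, hU, hAU⟩, hm0, hmε⟩ := (h.and (Ioo_mem_nhdsGT hε)).exists
  obtain ⟨V, ⟨hV, hVconv⟩, hVU⟩ := (LocallyConvexSpace.convex_basis_zero ℝ E).mem_iff.mp hU
  refine ⟨V, hV, fun χ hχ x hx => lt_trans ?_ hmε⟩
  have himage : (χ '' V).OrdConnected :=
    (hVconv.linear_image χ.toLinearMap).ordConnected
  refine himage.abs_lt_of_forall_abs_ne ⟨0, mem_of_mem_nhds hV, map_zero χ⟩ hm0.le ?_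
    (mem_image_of_mem χ hx)
  rintro _ ⟨z, hz, rfl⟩
  exact hAU χ hχ z (hVU hz)

theorem stmt15_general {E : Type*} [AddCommGroup E] [Module ℝ E] [TopologicalSpace E]
    [LocallyConvexSpace ℝ E]
    (A : Set (E →L[ℝ] ℝ)) :
    (∀ ε : ℝ, 0 < ε → ∃ U ∈ nhds (0 : E), ∀ χ ∈ A, ∀ x ∈ U, |χ x| < ε) ↔
    (∀ ε : ℝ, 0 < ε → ∃ U ∈ nhds (0 : E), ∀ χ ∈ A, ∀ x ∈ U,
      ‖Complex.exp (2 * Real.pi * Complex.I * (χ x : ℂ)) - 1‖ < ε) := by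
  constructor
  · intro h ε hε
    obtain ⟨U, hU, hAU⟩ := h (ε / (2 * Real.pi)) (by positivity)
    refine ⟨U, hU, fun χ hχ x hx => (norm_exp_two_pi_I_mul_sub_one_le _).trans_lt ?_⟩
    have := hAU χ hχ x hx
    rwa [lt_div_iff₀' (by positivity)] at this
  · intro h
    refine fun ε => LocallyConvexSpace.equicontinuous_of_eventually_abs_ne ?_
    filter_upwards [Ioc_mem_nhdsGT (by norm_num : (0 : ℝ) < 1 / 2)] with m ⟨hm0, hm⟩
    obtain ⟨U, hU, hAU⟩ := h (4 * m) (by positivity)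
    refine ⟨U, hU, fun χ hχ x hx hχx => ?_⟩
    have := four_mul_abs_le_norm_exp_two_pi_I_mul_sub_one (hχx.trans_le hm)
    rw [hχx] at this
    exact (hAU χ hχ x hx).not_ge this

/-- Let `E` be a real locally convex space and `ψ(χ)(x) = exp(2πi·χ(x))`.  A set `A ⊆ E′`
is equicontinuous iff `ψ(A)` is an equicontinuous set of characters of `(E, +)`. -/
theorem stmt15 {E : Type*} [AddCommGroup E] [Module ℝ E] [TopologicalSpace E]
    [IsTopologicalAddGroup E] [ContinuousSMul ℝ E] [LocallyConvexSpace ℝ E]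
    (A : Set (E →L[ℝ] ℝ)) :
    (∀ ε : ℝ, 0 < ε → ∃ U ∈ nhds (0 : E), ∀ χ ∈ A, ∀ x ∈ U, |χ x| < ε) ↔
    (∀ ε : ℝ, 0 < ε → ∃ U ∈ nhds (0 : E), ∀ χ ∈ A, ∀ x ∈ U,
      ‖Complex.exp (2 * Real.pi * Complex.I * (χ x : ℂ)) - 1‖ < ε) :=
  stmt15_general A
end
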